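/- arXiv:2407.19885 — 2 statements merged into one kernel-verified Lean document; each statement's English description precedes it below -/
import Mathlib

section
/- For all real x with |x| < π/2, tan x = 8x · ∑_{k≥0} 1/((2k+1)^2 π^2 - 4x^2). -/
/-!
Mittag-Leffler expansion of the cotangent, `cot y = 1/y - ∑ 2y/((nπ)² - y²)` over `n ≥ 1`, combined
with `tan x = cot x - 2 cot 2x`: the expansion of `2 cot 2x` runs over all denominators
`m²π² - 4x²` with `m ≥ 1`, that of `cot x` over the even `m`, so the difference keeps the odd `m`.
-/

open Real

theorem Real.hasSum_one_div_sub_cot {y : ℝ} (hy : sin y ≠ 0) :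
    HasSum (fun n : ℕ => 2 * y / (((n + 1) * π) ^ 2 - y ^ 2)) (1 / y - cot y) := by
  have hz : ((y / π : ℝ) : ℂ) ∈ Complex.integerComplement := by
    rintro ⟨n, hn⟩
    refine hy (sin_eq_zero_iff.mpr ⟨n, ?_⟩)
    have : (n : ℝ) = y / π := by exact_mod_cast hn
    rw [this, div_mul_cancel₀ _ pi_ne_zero]
  have hπ : (π : ℂ) ≠ 0 := by exact_mod_cast pi_ne_zero
  have hterm (n : ℕ) :
      -(cotTerm (y / π : ℝ) n / π) = ((2 * y / (((n + 1) * π) ^ 2 - y ^ 2) : ℝ) : ℂ) := by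
    have h₁ := Complex.integerComplement_add_ne_zero hz (n + 1)
    have h₂ := Complex.integerComplement_add_ne_zero hz (-(n + 1))
    rw [cotTerm_identity hz]
    push_cast at h₁ h₂ ⊢
    rw [show ((n + 1) * π) ^ 2 - (y : ℂ) ^ 2 =
        -π ^ 2 * ((y / π + (n + 1)) * (y / π + -(n + 1))) by field_simp; ring]
    field_simp
    ring
  have hval : -((π * Complex.cot (π * (y / π : ℝ)) - 1 / (y / π : ℝ)) / π) =
      ((1 / y - cot y : ℝ) : ℂ) := by
    push_cast
    rw [mul_div_cancel₀ _ hπ, ← Complex.ofReal_cot]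
    field_simp
    ring
  have h := ((summable_cotTerm hz).hasSum.div_const (π : ℂ)).neg
  rw [← cot_series_rep' hz] at h
  simp only [hterm, hval] at h
  exact Complex.hasSum_ofReal.mp h

theorem Real.tan_eq_cot_sub_two_mul_cot {x : ℝ} (hs : sin x ≠ 0) (hc : cos x ≠ 0) :
    tan x = cot x - 2 * cot (2 * x) := by
  rw [tan_eq_sin_div_cos, cot_eq_cos_div_sin, cot_eq_cos_div_sin, sin_two_mul, cos_two_mul]
  field_simp
  linear_combination sin_sq_add_cos_sq x

theorem HasSum.even_of_odd {G : Type*} [AddCommGroup G] [UniformSpace G] [IsUniformAddGroup G]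
    [CompleteSpace G] [T2Space G] {f : ℕ → G} {a b : G} (hf : HasSum f a)
    (ho : HasSum (fun k => f (2 * k + 1)) b) : HasSum (fun k => f (2 * k)) (a - b) := by
  have he := (hf.summable.comp_injective (mul_right_injective₀ (two_ne_zero' ℕ))).hasSum
  rwa [← (he.even_add_odd ho).unique hf, add_sub_cancel_right]

theorem stmt_5 (x : ℝ) (hx : |x| < π / 2) :
    Real.tan x =
      8 * x * ∑' k : ℕ, 1 / ((2 * (k : ℝ) + 1) ^ 2 * π ^ 2 - 4 * x ^ 2) := by
  rcases eq_or_ne x 0 with rfl | hx0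
  · simp
  obtain ⟨hxl, hxu⟩ := abs_lt.mp hx
  have hsx : sin x ≠ 0 := by
    rw [ne_eq, sin_eq_zero_iff_of_lt_of_lt (by linarith) (by linarith)]; exact hx0
  have hs2x : sin (2 * x) ≠ 0 := by
    rw [ne_eq, sin_eq_zero_iff_of_lt_of_lt (by linarith) (by linarith)]; simpa using hx0
  have hcx : cos x ≠ 0 := (cos_pos_of_mem_Ioo ⟨hxl, hxu⟩).ne'
  set f : ℕ → ℝ := fun m => 8 * x / ((m + 1) ^ 2 * π ^ 2 - 4 * x ^ 2) with hf
  have hall : HasSum f (2 * (1 / (2 * x) - cot (2 * x))) := by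
    refine ((hasSum_one_div_sub_cot hs2x).mul_left 2).congr_fun fun m => ?_
    rw [hf]; ring
  have hodd : HasSum (fun k => f (2 * k + 1)) (1 / x - cot x) := by
    refine (hasSum_one_div_sub_cot hsx).congr_fun fun k => ?_
    rw [hf]; push_cast
    rw [show (2 * (k : ℝ) + 1 + 1) ^ 2 * π ^ 2 - 4 * x ^ 2 =
        (((k + 1) * π) ^ 2 - x ^ 2) * 4 by ring, ← div_div]
    ring
  rw [← tsum_mul_left, ((hall.even_of_odd hodd).congr_fun fun k => ?_).tsum_eq,
    tan_eq_cot_sub_two_mul_cot hsx hcx]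
  · field_simp; ring
  · rw [hf]; push_cast; ring
end

section
/- For all real x with |x| < π/2, tanh x = -∑_{k≥1} E_{2k-1} · 2^{2k-1} x^{2k-1}/(2k-1)!, where E_n are the Euler numbers. -/
/-!
The function `G z = 2 / (exp z + 1)` is holomorphic on `‖z‖ < π`, since `exp z = -1` only at odd
multiples of `π i`, so it is the sum of its Taylor series at `0` there. Applying the Leibniz rule to
`(1 + exp z) * G z = 2` shows that the derivatives `G⁽ⁿ⁾(0)` satisfy the recursion defining the
Euler numbers. Finally `2 / (exp (2x) + 1) = 1 - tanh x`, and `tanh` is odd, so `tanh x` is minus the odd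
part of the series at `2x`.
-/

open Real

/-- The Euler numbers, defined by the generating function 2/(e^z+1) = ∑ E_n z^n/n!,
equivalently by E_0 = 1 and E_n = -∑_{i=0}^n C(n,i) E_i for n ≥ 1. -/
noncomputable def eulerNumber (n : ℕ) : ℚ :=
  Nat.strongRecOn n fun n ih =>
    if n = 0 then 1
    else -(1/2) * ∑ i : Fin n, (n.choose i : ℚ) * ih i i.isLt

open Nat Filter Topology

lemma eulerNumber_eq (n : ℕ) : eulerNumber n =
    if n = 0 then 1 else -(1/2) * ∑ i : Fin n, (n.choose i : ℚ) * eulerNumber i := by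
  rw [eulerNumber]; unfold Nat.strongRecOn; rw [WellFounded.fix_eq]; rfl

lemma eulerNumber_zero : eulerNumber 0 = 1 := by
  simp [eulerNumber_eq]

lemma sum_range_choose_mul_eulerNumber {n : ℕ} (hn : n ≠ 0) :
    ∑ i ∈ Finset.range n, (n.choose i : ℚ) * eulerNumber i = -2 * eulerNumber n := by
  rw [eulerNumber_eq n, if_neg hn, Finset.sum_range fun i => (n.choose i : ℚ) * eulerNumber i]
  ring

lemma eq_eulerNumber_of_sum_range_choose {K : Type*} [Field K] [CharZero K] {d : ℕ → K}
    (h0 : d 0 = 1) (hrec : ∀ n, n ≠ 0 → ∑ i ∈ Finset.range n, (n.choose i : K) * d i = -2 * d n)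
    (n : ℕ) : d n = eulerNumber n := by
  induction n using Nat.strong_induction_on with
  | _ n ih =>
    rcases eq_or_ne n 0 with rfl | hn
    · simp [h0, eulerNumber_zero]
    · have h := hrec n hn
      rw [Finset.sum_congr rfl fun i hi => by rw [ih i (Finset.mem_range.mp hi)]] at h
      have hE := congrArg (Rat.cast : ℚ → K) (sum_range_choose_mul_eulerNumber hn)
      push_cast at hE
      exact mul_left_cancel₀ (by norm_num : (-2 : K) ≠ 0) (h.symm.trans hE)

lemma iteratedDeriv_one_add_exp_zero (n : ℕ) :
    iteratedDeriv n (fun z : ℂ => 1 + Complex.exp z) 0 = if n = 0 then 2 else 1 := by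
  rcases eq_or_ne n 0 with rfl | hn
  · norm_num
  · rw [iteratedDeriv_const_add (Nat.pos_of_ne_zero hn), iteratedDeriv_eq_iterate,
      Complex.iter_deriv_exp, if_neg hn, Complex.exp_zero]

lemma iteratedDeriv_two_div_exp_add_one_zero (n : ℕ) :
    iteratedDeriv n (fun z : ℂ => 2 / (Complex.exp z + 1)) 0 = eulerNumber n := by
  set G : ℂ → ℂ := fun z => 2 / (Complex.exp z + 1)
  set h : ℂ → ℂ := fun z => 1 + Complex.exp z
  have hh : Continuous h := continuous_const.add Complex.continuous_exp
  have hne : h 0 ≠ 0 := by norm_num [h]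
  have hG (m : ℕ) : ContDiffAt ℂ m G 0 := by
    refine contDiffAt_const.div (Complex.contDiff_exp.contDiffAt.add contDiffAt_const) ?_
    norm_num
  have hGh : G * h =ᶠ[𝓝 0] fun _ => 2 := by
    filter_upwards [hh.continuousAt.eventually_ne hne] with z hz
    simp only [G, h, Pi.mul_apply] at hz ⊢
    rw [add_comm (1 : ℂ)] at hz ⊢
    exact div_mul_cancel₀ _ hz
  have hleibniz (m : ℕ) : ∑ i ∈ Finset.range (m + 1), (m.choose i : ℂ) * iteratedDeriv i G 0 *
      (if m - i = 0 then 2 else 1) = if m = 0 then 2 else 0 := by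
    simp_rw [← iteratedDeriv_one_add_exp_zero]
    rw [← iteratedDeriv_mul (hG m) (contDiffAt_const.add Complex.contDiff_exp.contDiffAt),
      hGh.iteratedDeriv_eq, iteratedDeriv_const]
  refine eq_eulerNumber_of_sum_range_choose (d := fun i => iteratedDeriv i G 0) ?_
    (fun m hm => ?_) n
  · norm_num [G]
  · have := hleibniz m
    rw [Finset.sum_range_succ, if_neg hm, Nat.sub_self, if_pos rfl, Nat.choose_self] at this
    rw [Finset.sum_congr rfl fun i hi => by
      rw [if_neg (Nat.sub_ne_zero_of_lt (Finset.mem_range.mp hi)), mul_one]] at this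
    linear_combination this

lemma Complex.exp_add_one_ne_zero_of_norm_lt_pi {z : ℂ} (hz : ‖z‖ < π) :
    Complex.exp z + 1 ≠ 0 := by
  intro h
  have hexp : Complex.exp z = Complex.exp (π * I) := by
    rw [Complex.exp_pi_mul_I]; linear_combination h
  obtain ⟨k, rfl⟩ := Complex.exp_eq_exp_iff_exists_int.mp hexp
  have hnorm : ‖(π * I + k * (2 * π * I) : ℂ)‖ = |2 * (k : ℝ) + 1| * π := by
    rw [show (π * I + k * (2 * π * I) : ℂ) = ((2 * k + 1 : ℝ) : ℂ) * π * I by push_cast; ring]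
    rw [norm_mul, norm_mul, Complex.norm_real, Complex.norm_real, Complex.norm_I,
      Real.norm_eq_abs, Real.norm_eq_abs, abs_of_pos pi_pos, mul_one]
  have hk : (1 : ℝ) ≤ |2 * (k : ℝ) + 1| := by
    have : (1 : ℤ) ≤ |2 * k + 1| := Int.one_le_abs (by omega)
    exact_mod_cast this
  rw [hnorm] at hz
  nlinarith [pi_pos]

theorem Complex.hasSum_eulerNumber_div_factorial_mul_pow {z : ℂ} (hz : ‖z‖ < π) :
    HasSum (fun n => (eulerNumber n / n ! : ℂ) * z ^ n) (2 / (Complex.exp z + 1)) := by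
  have hdiff : DifferentiableOn ℂ (fun z : ℂ => 2 / (Complex.exp z + 1)) (Metric.ball 0 π) :=
    fun w hw => (differentiableAt_const _).div (Complex.differentiableAt_exp.add_const 1)
      (Complex.exp_add_one_ne_zero_of_norm_lt_pi (mem_ball_zero_iff.mp hw))
      |>.differentiableWithinAt
  refine (Complex.hasSum_taylorSeries_on_ball hdiff (mem_ball_zero_iff.mpr hz)).congr_fun
    fun n => ?_
  rw [iteratedDeriv_two_div_exp_add_one_zero, sub_zero, smul_eq_mul, smul_eq_mul]
  ring

theorem Real.hasSum_eulerNumber_div_factorial_mul_pow {x : ℝ} (hx : |x| < π) :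
    HasSum (fun n => (eulerNumber n / n ! : ℝ) * x ^ n) (2 / (Real.exp x + 1)) := by
  have h := Complex.hasSum_eulerNumber_div_factorial_mul_pow (z := x) (by simpa using hx)
  exact_mod_cast h

lemma Real.two_div_exp_two_mul_add_one (x : ℝ) :
    2 / (Real.exp (2 * x) + 1) = 1 - Real.tanh x := by
  rw [Real.tanh_eq, Real.exp_neg, two_mul, Real.exp_add]
  have := Real.exp_pos x
  field_simp
  ring

theorem HasSum.odd_terms_of_hasSum_neg {K : Type*} [Field K] [TopologicalSpace K]
    [IsTopologicalRing K] [NeZero (2 : K)] {a : ℕ → K} {y s t : K}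
    (hs : HasSum (fun n => a n * y ^ n) s) (ht : HasSum (fun n => a n * (-y) ^ n) t) :
    HasSum (fun k => a (2 * k + 1) * y ^ (2 * k + 1)) ((s - t) / 2) := by
  have hodd : Function.Injective (fun k : ℕ => 2 * k + 1) := fun k l hkl => by
    simp only at hkl; omega
  have heven (n : ℕ) (hn : n ∉ Set.range (fun k : ℕ => 2 * k + 1)) :
      (a n * y ^ n - a n * (-y) ^ n) / 2 = 0 := by
    obtain hn' | ⟨k, rfl⟩ := Nat.even_or_odd n
    · rw [hn'.neg_pow, sub_self, zero_div]
    · exact absurd ⟨k, rfl⟩ hn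
  refine ((hodd.hasSum_iff heven).mpr ((hs.sub ht).div_const 2)).congr_fun fun k => ?_
  simp only [Function.comp_apply, (odd_two_mul_add_one k).neg_pow, mul_neg, sub_neg_eq_add,
    ← two_mul]
  exact (mul_div_cancel_left₀ _ two_ne_zero).symm

theorem stmt_19 (x : ℝ) (hx : |x| < π / 2) :
    Real.tanh x =
      -∑' k : ℕ, (eulerNumber (2 * (k + 1) - 1) : ℝ) *
        2 ^ (2 * (k + 1) - 1) * x ^ (2 * (k + 1) - 1) /
          (Nat.factorial (2 * (k + 1) - 1)) := by
  have h2x : |2 * x| < π := by rw [abs_mul, abs_two]; linarith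
  have hodd := (Real.hasSum_eulerNumber_div_factorial_mul_pow h2x).odd_terms_of_hasSum_neg
    (Real.hasSum_eulerNumber_div_factorial_mul_pow (by rwa [abs_neg]))
  rw [← mul_neg, Real.two_div_exp_two_mul_add_one, Real.two_div_exp_two_mul_add_one,
    Real.tanh_neg] at hodd
  have hterms : (fun k : ℕ => (eulerNumber (2 * (k + 1) - 1) : ℝ) *
      2 ^ (2 * (k + 1) - 1) * x ^ (2 * (k + 1) - 1) / (Nat.factorial (2 * (k + 1) - 1))) =
      fun k => (eulerNumber (2 * k + 1) / (2 * k + 1)! : ℝ) * (2 * x) ^ (2 * k + 1) := by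
    funext k
    rw [show 2 * (k + 1) - 1 = 2 * k + 1 by omega, mul_pow]
    ring
  rw [hterms, hodd.tsum_eq]
  ring
end
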